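/- Let $1 \le q \le p \le \infty$ and $\phi \in \mathcal{G}_{q,p}$. Then the generalized Fofana space $(L^q,L^p)^\phi(\mathbb{R}^d) = \{ f \text{ measurable} : \|f\|_{(L^q,L^p)^\phi} < \infty \}$, equipped with the norm $\|\cdot\|_{(L^q,L^p)^\phi}$, is complete: every sequence $(f_m)_{m \in \mathbb{N}}$ in $(L^q,L^p)^\phi(\mathbb{R}^d)$ that is Cauchy with respect to $\|\cdot\|_{(L^q,L^p)^\phi}$ converges in this norm to some $f \in (L^q,L^p)^\phi(\mathbb{R}^d)$. -/

import Mathlib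

open MeasureTheory ENNReal Set Metric Filter

noncomputable section

/-- Shorthand for the Euclidean space `ℝ^d`. -/
abbrev Rd (d : ℕ) := EuclideanSpace ℝ (Fin d)

/-- The `L^p` "norm" (with values in `ℝ≥0∞`) of an `ℝ≥0∞`-valued function. -/
def eLpNormE {α : Type*} [MeasurableSpace α] (g : α → ℝ≥0∞) (p : ℝ≥0∞) (μ : Measure α) :
    ℝ≥0∞ :=
  if p = ∞ then essSup g μ else (∫⁻ x, g x ^ p.toReal ∂μ) ^ (1 / p.toReal)

/-- The discrete `ℓ^p` norm of an `ℝ≥0∞`-valued family. -/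
def lpNormE {ι : Type*} (a : ι → ℝ≥0∞) (p : ℝ≥0∞) : ℝ≥0∞ :=
  if p = ∞ then ⨆ k, a k else (∑' k, a k ^ p.toReal) ^ (1 / p.toReal)

/-- The continuous amalgam norm `‖f‖_{q,p,r}` of `f : ℝ^d → E`:
the `L^p` norm (in `y`) of `y ↦ ‖f · χ_{B(y,r)}‖_{L^q}`. -/
def contAmalgam (d : ℕ) {E : Type*} [NormedAddCommGroup E] (f : Rd d → E)
    (q p : ℝ≥0∞) (r : ℝ) : ℝ≥0∞ :=
  eLpNormE (fun y => eLpNorm ((Metric.ball y r).indicator f) q volume) p volume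

/-- The continuous amalgam norm of an `ℝ≥0∞`-valued function. -/
def contAmalgamE (d : ℕ) (g : Rd d → ℝ≥0∞) (q p : ℝ≥0∞) (r : ℝ) : ℝ≥0∞ :=
  eLpNormE (fun y => eLpNormE ((Metric.ball y r).indicator g) q volume) p volume

/-- The half-open cube `Q_k^r = ∏_i [r kᵢ, r (kᵢ + 1))` indexed by `k ∈ ℤ^d`. -/
def unitCube (d : ℕ) (r : ℝ) (k : Fin d → ℤ) : Set (Rd d) :=
  {x | ∀ i, r * k i ≤ x i ∧ x i < r * (k i + 1)}

/-- The discrete amalgam norm: the `ℓ^p` norm over `k ∈ ℤ^d` of `‖f χ_{Q_k^r}‖_{L^q}`. -/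
def discAmalgam (d : ℕ) {E : Type*} [NormedAddCommGroup E] (f : Rd d → E)
    (q p : ℝ≥0∞) (r : ℝ) : ℝ≥0∞ :=
  lpNormE (fun k : Fin d → ℤ => eLpNorm ((unitCube d r k).indicator f) q volume) p

/-- The class `𝒢_{q,p}` of weight functions: `φ` is positive and measurable on `(0,∞)`,
`t ↦ t^{d/p} φ(t)` is almost decreasing and `t ↦ t^{d/q} φ(t)` is almost increasing
(with the convention `1/∞ = 0`). -/
structure IsGqp (d : ℕ) (q p : ℝ≥0∞) (φ : ℝ → ℝ) : Prop where
  measurable : Measurable φ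
  pos : ∀ t : ℝ, 0 < t → 0 < φ t
  almost_decreasing : ∃ C : ℝ, 0 < C ∧ ∀ r s : ℝ, 0 < r → r ≤ s →
    s ^ ((d : ℝ) * (1 / p).toReal) * φ s ≤ C * (r ^ ((d : ℝ) * (1 / p).toReal) * φ r)
  almost_increasing : ∃ C : ℝ, 0 < C ∧ ∀ r s : ℝ, 0 < r → r ≤ s →
    r ^ ((d : ℝ) * (1 / q).toReal) * φ r ≤ C * (s ^ ((d : ℝ) * (1 / q).toReal) * φ s)

/-- The generalized Fofana norm
`‖f‖_{(L^q,L^p)^φ} = sup_{r>0} φ(r)⁻¹ r^{d(-1/q - 1/p)} ‖f‖_{q,p,r}`. -/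
def fofanaNorm (d : ℕ) {E : Type*} [NormedAddCommGroup E] (f : Rd d → E)
    (q p : ℝ≥0∞) (φ : ℝ → ℝ) : ℝ≥0∞ :=
  ⨆ r : {r : ℝ // 0 < r},
    ENNReal.ofReal ((φ r)⁻¹ * (r : ℝ) ^ ((d : ℝ) * (-(1 / q).toReal - (1 / p).toReal))) *
      contAmalgam d f q p r

/-- The generalized Fofana norm of an `ℝ≥0∞`-valued function. -/
def fofanaNormE (d : ℕ) (g : Rd d → ℝ≥0∞) (q p : ℝ≥0∞) (φ : ℝ → ℝ) : ℝ≥0∞ :=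
  ⨆ r : {r : ℝ // 0 < r},
    ENNReal.ofReal ((φ r)⁻¹ * (r : ℝ) ^ ((d : ℝ) * (-(1 / q).toReal - (1 / p).toReal))) *
      contAmalgamE d g q p r

/-- The discrete variant of the generalized Fofana norm,
`sup_{r>0} φ(r)⁻¹ r^{-d/q} ‖f‖~_{q,p,r}`. -/
def fofanaNormDisc (d : ℕ) {E : Type*} [NormedAddCommGroup E] (f : Rd d → E)
    (q p : ℝ≥0∞) (φ : ℝ → ℝ) : ℝ≥0∞ :=
  ⨆ r : {r : ℝ // 0 < r},
    ENNReal.ofReal ((φ r)⁻¹ * (r : ℝ) ^ (-(d : ℝ) * (1 / q).toReal)) *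
      discAmalgam d f q p r

/-- The Hardy–Littlewood maximal function (with values in `ℝ≥0∞`). -/
def hlMax (d : ℕ) {E : Type*} [NormedAddCommGroup E] (f : Rd d → E) (x : Rd d) : ℝ≥0∞ :=
  ⨆ r : {r : ℝ // 0 < r},
    (volume (Metric.ball x (r : ℝ)))⁻¹ * ∫⁻ y in Metric.ball x (r : ℝ), (‖f y‖₊ : ℝ≥0∞)

open scoped Topology

/-!
The Fofana norm at radius `2R` controls the `L^q` norm on every ball `B(z, R)`, because
`B(z, R) ⊆ B(y, 2R)` for every `y ∈ B(z, R)`. Hence a Fofana–Cauchy sequence is Cauchy in `L^q` on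
each ball, and a fast subsequence `f_{n_k}` converges almost everywhere to a measurable `g`.
The amalgam norms are iterated Lebesgue norms, so Minkowski's inequality and Fatou's lemma, applied
in `x` and then in `y`, survive the supremum over `r`. Fatou gives
`‖f_m - g‖ ≤ liminf_k ‖f_m - f_{n_k}‖`, which tends to `0`, and Minkowski gives `‖g‖ < ∞`.
-/

section LpNorms

variable {α : Type*} [MeasurableSpace α] {μ : Measure α}

theorem eLpNormE_eq_eLpNorm {g : α → ℝ≥0∞} {p : ℝ≥0∞} (hp : p ≠ 0) :
    eLpNormE g p μ = eLpNorm g p μ := by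
  unfold eLpNormE
  split_ifs with hp_top
  · simp [hp_top, eLpNorm_exponent_top, eLpNormEssSup]
  · simp [eLpNorm_eq_lintegral_rpow_enorm_toReal hp hp_top]

theorem eLpNorm_le_liminf_of_le_liminf {G : α → ℝ≥0∞} {H : ℕ → α → ℝ≥0∞} {p : ℝ≥0∞}
    (hH : p ≠ ∞ → ∀ n, AEMeasurable (H n) μ)
    (hGH : ∀ᵐ x ∂μ, G x ≤ liminf (H · x) atTop) :
    eLpNorm G p μ ≤ liminf (fun n => eLpNorm (H n) p μ) atTop := by
  rcases eq_or_ne p 0 with rfl | hp0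
  · simp
  rcases eq_or_ne p ∞ with rfl | hp_top
  · simp only [eLpNorm_exponent_top, eLpNormEssSup, enorm_eq_self]
    exact (essSup_mono_ae hGH).trans (ENNReal.essSup_liminf_le H)
  have hp_pos : 0 < p.toReal := ENNReal.toReal_pos hp0 hp_top
  have liminf_rpow : ∀ (u : ℕ → ℝ≥0∞) {c : ℝ} (hc : 0 < c),
      liminf u atTop ^ c = liminf (fun n => u n ^ c) atTop := fun u c hc =>
    (ENNReal.orderIsoRpow c hc).liminf_apply (by isBoundedDefault) (by isBoundedDefault)
      (by isBoundedDefault) (by isBoundedDefault)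
  simp only [eLpNorm_eq_lintegral_rpow_enorm_toReal hp0 hp_top, enorm_eq_self]
  calc (∫⁻ x, G x ^ p.toReal ∂μ) ^ (1 / p.toReal)
      ≤ (∫⁻ x, liminf (fun n => H n x ^ p.toReal) atTop ∂μ) ^ (1 / p.toReal) := by
        gcongr ?_ ^ _
        refine lintegral_mono_ae (hGH.mono fun x hx => ?_)
        rw [← liminf_rpow _ hp_pos]
        gcongr
    _ ≤ (liminf (fun n => ∫⁻ x, H n x ^ p.toReal ∂μ) atTop) ^ (1 / p.toReal) := by
        gcongr ?_ ^ _
        exact lintegral_liminf_le' fun n => (hH hp_top n).pow_const _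
    _ = liminf (fun n => (∫⁻ x, H n x ^ p.toReal ∂μ) ^ (1 / p.toReal)) atTop :=
        liminf_rpow _ (by positivity)

end LpNorms

section BallLpNorm

variable {d : ℕ} {E : Type*} [NormedAddCommGroup E] {q p : ℝ≥0∞} {r : ℝ}

def ballLpNorm (d : ℕ) (f : Rd d → E) (q : ℝ≥0∞) (r : ℝ) (y : Rd d) : ℝ≥0∞ :=
  eLpNorm ((ball y r).indicator f) q volume

theorem contAmalgam_eq_eLpNorm (f : Rd d → E) (hp : p ≠ 0) :
    contAmalgam d f q p r = eLpNorm (ballLpNorm d f q r) p volume :=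
  eLpNormE_eq_eLpNorm hp

theorem measurable_ballLpNorm [MeasurableSpace E] [OpensMeasurableSpace E] {f : Rd d → E}
    (hf : Measurable f) (hq : q ≠ ∞) (r : ℝ) : Measurable (ballLpNorm d f q r) := by
  rcases eq_or_ne q 0 with rfl | hq0
  · rw [show ballLpNorm d f 0 r = 0 from funext fun _ => eLpNorm_exponent_zero]
    exact measurable_const
  set S : Set (Rd d × Rd d) := {z | z.2 ∈ ball z.1 r}
  have hS : MeasurableSet S :=
    measurableSet_lt (measurable_snd.dist measurable_fst) measurable_const
  have h_prod : ballLpNorm d f q r =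
      fun y => (∫⁻ x, S.indicator (fun z => ‖f z.2‖ₑ ^ q.toReal) (y, x)) ^ (1 / q.toReal) := by
    ext y
    rw [ballLpNorm, eLpNorm_eq_lintegral_rpow_enorm_toReal hq0 hq]
    congr 1
    refine lintegral_congr fun x => ?_
    by_cases hx : x ∈ ball y r
    · rw [indicator_of_mem hx, indicator_of_mem (show (y, x) ∈ S from hx)]
    · rw [indicator_of_notMem hx, indicator_of_notMem (show (y, x) ∉ S from hx), enorm_zero,
        ENNReal.zero_rpow_of_pos (ENNReal.toReal_pos hq0 hq)]
  rw [h_prod]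
  exact (((hf.comp measurable_snd).enorm.pow_const _).indicator hS).lintegral_prod_right'.pow_const
    _

theorem ballLpNorm_add_le {a b : Rd d → E} (hq : 1 ≤ q) (ha : AEStronglyMeasurable a volume)
    (hb : AEStronglyMeasurable b volume) (r : ℝ) (y : Rd d) :
    ballLpNorm d (a + b) q r y ≤ ballLpNorm d a q r y + ballLpNorm d b q r y := by
  rw [ballLpNorm, indicator_add']
  exact eLpNorm_add_le (ha.indicator measurableSet_ball) (hb.indicator measurableSet_ball) hq

theorem ballLpNorm_neg (f : Rd d → E) (q : ℝ≥0∞) (r : ℝ) :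
    ballLpNorm d (-f) q r = ballLpNorm d f q r := by
  ext y
  rw [ballLpNorm, indicator_neg', eLpNorm_neg, ballLpNorm]

theorem ballLpNorm_le_liminf {a : Rd d → E} {F : ℕ → Rd d → E}
    (hF : ∀ n, AEStronglyMeasurable (F n) volume)
    (hconv : ∀ᵐ x, Tendsto (F · x) atTop (𝓝 (a x))) (r : ℝ) (y : Rd d) :
    ballLpNorm d a q r y ≤ liminf (fun n => ballLpNorm d (F n) q r y) atTop := by
  refine Lp.eLpNorm_lim_le_liminf_eLpNorm (fun n => (hF n).indicator measurableSet_ball) _ ?_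
  filter_upwards [hconv] with x hx
  by_cases hxy : x ∈ ball y r
  · simpa [hxy] using hx
  · simp [hxy]

theorem eLpNorm_restrict_ball_le_ballLpNorm (h : Rd d → E) {z y : Rd d} {R : ℝ}
    (hy : y ∈ ball z R) :
    eLpNorm h q (volume.restrict (ball z R)) ≤ ballLpNorm d h q (2 * R) y := by
  rw [ballLpNorm, eLpNorm_indicator_eq_eLpNorm_restrict measurableSet_ball]
  refine eLpNorm_mono_measure _ (Measure.restrict_mono (ball_subset_ball' ?_) le_rfl)
  rw [mem_ball'] at hy
  linarith

end BallLpNorm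

section Amalgam

variable {d : ℕ} {E : Type*} [NormedAddCommGroup E] {q p : ℝ≥0∞}

section Measurable

variable [MeasurableSpace E] [OpensMeasurableSpace E] [SecondCountableTopology E]

theorem contAmalgam_add_le {a b : Rd d → E}
    (hq : 1 ≤ q) (hqp : q ≤ p) (ha : Measurable a) (hb : Measurable b) (r : ℝ) :
    contAmalgam d (a + b) q p r ≤ contAmalgam d a q p r + contAmalgam d b q p r := by
  have hp : 1 ≤ p := hq.trans hqp
  simp only [contAmalgam_eq_eLpNorm _ (one_pos.trans_le hp).ne']
  calc eLpNorm (ballLpNorm d (a + b) q r) p volume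
      ≤ eLpNorm (ballLpNorm d a q r + ballLpNorm d b q r) p volume :=
        eLpNorm_mono_enorm fun y => ballLpNorm_add_le hq ha.aestronglyMeasurable
          hb.aestronglyMeasurable r y
    _ ≤ eLpNorm (ballLpNorm d a q r) p volume + eLpNorm (ballLpNorm d b q r) p volume := by
        rcases eq_or_ne p ∞ with rfl | hp_top
        · simpa only [eLpNorm_exponent_top] using eLpNormEssSup_add_le
        · have hq_top : q ≠ ∞ := ne_top_of_le_ne_top hp_top hqp
          exact eLpNorm_add_le (measurable_ballLpNorm ha hq_top r).aestronglyMeasurable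
            (measurable_ballLpNorm hb hq_top r).aestronglyMeasurable hp

theorem contAmalgam_le_liminf {a : Rd d → E} {F : ℕ → Rd d → E} (hp : p ≠ 0) (hqp : q ≤ p)
    (hF : ∀ n, Measurable (F n)) (hconv : ∀ᵐ x, Tendsto (F · x) atTop (𝓝 (a x))) (r : ℝ) :
    contAmalgam d a q p r ≤ liminf (fun n => contAmalgam d (F n) q p r) atTop := by
  simp only [contAmalgam_eq_eLpNorm _ hp]
  refine eLpNorm_le_liminf_of_le_liminf (fun hp_top n => ?_) (ae_of_all _ fun y =>
    ballLpNorm_le_liminf (fun n => (hF n).aestronglyMeasurable) hconv r y)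
  exact (measurable_ballLpNorm (hF n) (ne_top_of_le_ne_top hp_top hqp) r).aemeasurable

end Measurable

theorem mul_eLpNorm_restrict_ball_le_contAmalgam (h : Rd d → E) (hp : p ≠ 0) (z : Rd d) {R : ℝ}
    (hR : 0 < R) :
    volume (ball z R) ^ (1 / p.toReal) * eLpNorm h q (volume.restrict (ball z R)) ≤
      contAmalgam d h q p (2 * R) := by
  have hμ : volume.restrict (ball z R) ≠ 0 := by
    simpa [Measure.restrict_eq_zero] using (measure_ball_pos volume z hR).ne'
  rw [contAmalgam_eq_eLpNorm _ hp]
  calc volume (ball z R) ^ (1 / p.toReal) * eLpNorm h q (volume.restrict (ball z R))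
      = eLpNorm (fun _ => eLpNorm h q (volume.restrict (ball z R))) p
          (volume.restrict (ball z R)) := by
        rw [eLpNorm_const _ hp hμ, Measure.restrict_apply_univ, enorm_eq_self, mul_comm]
    _ ≤ eLpNorm (ballLpNorm d h q (2 * R)) p (volume.restrict (ball z R)) :=
        eLpNorm_mono_enorm_ae (ae_restrict_of_forall_mem measurableSet_ball fun y hy =>
          eLpNorm_restrict_ball_le_ballLpNorm h hy)
    _ ≤ eLpNorm (ballLpNorm d h q (2 * R)) p volume :=
        eLpNorm_mono_measure _ Measure.restrict_le_self

end Amalgam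

section Fofana

variable {d : ℕ} {E : Type*} [NormedAddCommGroup E] {q p : ℝ≥0∞} {φ : ℝ → ℝ}

def fofanaWeight (d : ℕ) (q p : ℝ≥0∞) (φ : ℝ → ℝ) (r : ℝ) : ℝ≥0∞ :=
  ENNReal.ofReal ((φ r)⁻¹ * r ^ ((d : ℝ) * (-(1 / q).toReal - (1 / p).toReal)))

theorem fofanaNorm_eq_iSup (f : Rd d → E) (q p : ℝ≥0∞) (φ : ℝ → ℝ) :
    fofanaNorm d f q p φ =
      ⨆ r : {r : ℝ // 0 < r}, fofanaWeight d q p φ r * contAmalgam d f q p r :=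
  rfl

theorem le_fofanaNorm (f : Rd d → E) (q p : ℝ≥0∞) (φ : ℝ → ℝ) {r : ℝ} (hr : 0 < r) :
    fofanaWeight d q p φ r * contAmalgam d f q p r ≤ fofanaNorm d f q p φ :=
  le_iSup (fun s : {s : ℝ // 0 < s} => fofanaWeight d q p φ s * contAmalgam d f q p s) ⟨r, hr⟩

theorem fofanaWeight_pos {r : ℝ} (hr : 0 < r) (hφ : 0 < φ r) : 0 < fofanaWeight d q p φ r :=
  ENNReal.ofReal_pos.mpr (mul_pos (inv_pos.mpr hφ) (Real.rpow_pos_of_pos hr _))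

theorem fofanaNorm_neg (f : Rd d → E) (q p : ℝ≥0∞) (φ : ℝ → ℝ) :
    fofanaNorm d (-f) q p φ = fofanaNorm d f q p φ := by
  simp only [fofanaNorm_eq_iSup, contAmalgam, ← ballLpNorm.eq_def, ballLpNorm_neg]

section Measurable

variable [MeasurableSpace E] [BorelSpace E] [SecondCountableTopology E]

theorem fofanaNorm_add_le {a b : Rd d → E} (hq : 1 ≤ q) (hqp : q ≤ p) (ha : Measurable a)
    (hb : Measurable b) :
    fofanaNorm d (a + b) q p φ ≤ fofanaNorm d a q p φ + fofanaNorm d b q p φ := by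
  refine iSup_le fun ⟨r, hr⟩ => ?_
  calc fofanaWeight d q p φ r * contAmalgam d (a + b) q p r
      ≤ fofanaWeight d q p φ r * contAmalgam d a q p r +
          fofanaWeight d q p φ r * contAmalgam d b q p r := by
        rw [← mul_add]
        gcongr
        exact contAmalgam_add_le hq hqp ha hb r
    _ ≤ fofanaNorm d a q p φ + fofanaNorm d b q p φ :=
        add_le_add (le_fofanaNorm a q p φ hr) (le_fofanaNorm b q p φ hr)

theorem fofanaNorm_le_add_fofanaNorm_sub {a b : Rd d → E} (hq : 1 ≤ q) (hqp : q ≤ p)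
    (ha : Measurable a) (hab : Measurable (a - b)) :
    fofanaNorm d b q p φ ≤ fofanaNorm d a q p φ + fofanaNorm d (a - b) q p φ := by
  calc fofanaNorm d b q p φ = fofanaNorm d (a + -(a - b)) q p φ := by rw [neg_sub, add_sub_cancel]
    _ ≤ fofanaNorm d a q p φ + fofanaNorm d (a - b) q p φ := by
      rw [← fofanaNorm_neg (a - b)]
      exact fofanaNorm_add_le hq hqp ha hab.neg

theorem fofanaNorm_le_of_ae_tendsto {a : Rd d → E} {F : ℕ → Rd d → E} {c : ℝ≥0∞}
    (hp : p ≠ 0) (hqp : q ≤ p) (hF : ∀ n, Measurable (F n))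
    (hconv : ∀ᵐ x, Tendsto (F · x) atTop (𝓝 (a x)))
    (hc : ∀ᶠ n in atTop, fofanaNorm d (F n) q p φ ≤ c) :
    fofanaNorm d a q p φ ≤ c := by
  refine iSup_le fun ⟨r, hr⟩ => ?_
  set w := fofanaWeight d q p φ r
  calc w * contAmalgam d a q p r
      ≤ w * liminf (fun n => contAmalgam d (F n) q p r) atTop := by
        gcongr
        exact contAmalgam_le_liminf hp hqp hF hconv r
    _ = liminf (fun n => w * contAmalgam d (F n) q p r) atTop :=
        Monotone.map_liminf_of_continuousAt (fun _ _ h => mul_le_mul_right h w) _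
          (ENNReal.continuous_const_mul ENNReal.ofReal_ne_top).continuousAt
    _ ≤ c := liminf_le_of_frequently_le'
        (hc.mono fun n hn => (le_fofanaNorm (F n) q p φ hr).trans hn).frequently

end Measurable

theorem ae_tendsto_of_cauchy_fofanaNorm [CompleteSpace E] {F : ℕ → Rd d → E}
    (hφ : ∀ t, 0 < t → 0 < φ t) (hq : 1 ≤ q) (hp : p ≠ 0)
    (hF : ∀ n, AEStronglyMeasurable (F n) volume) {B : ℕ → ℝ≥0∞} (hB : ∑' N, B N ≠ ∞)
    (hcau : ∀ N n m, N ≤ n → N ≤ m → fofanaNorm d (F n - F m) q p φ < B N) :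
    ∀ᵐ x, ∃ l, Tendsto (F · x) atTop (𝓝 l) := by
  rw [← Measure.restrict_univ (μ := volume), ← iUnion_ball_nat_succ (0 : Rd d),
    ae_restrict_iUnion_iff]
  intro j
  have hR : (0 : ℝ) < j + 1 := by positivity
  have hV : volume (ball (0 : Rd d) (j + 1)) ≠ 0 := (measure_ball_pos volume _ hR).ne'
  set c := fofanaWeight d q p φ (2 * (j + 1)) * volume (ball (0 : Rd d) (j + 1)) ^ (1 / p.toReal)
  have hc0 : c ≠ 0 := mul_ne_zero (fofanaWeight_pos (by positivity) (hφ _ (by positivity))).ne'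
    (ENNReal.rpow_pos (pos_iff_ne_zero.2 hV) measure_ball_lt_top.ne).ne'
  have hc_top : c ≠ ∞ := mul_ne_top ENNReal.ofReal_ne_top
    (ENNReal.rpow_ne_top_of_nonneg (by positivity) measure_ball_lt_top.ne)
  refine Lp.ae_tendsto_of_cauchy_eLpNorm (fun n => (hF n).restrict) hq (B := fun N => c⁻¹ * B N)
    (by rw [ENNReal.tsum_mul_left]; exact mul_ne_top (ENNReal.inv_ne_top.2 hc0) hB)
    fun N n m hn hm => ?_
  rw [← ENNReal.inv_mul_cancel_left hc0 hc_top (b := eLpNorm _ _ _)]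
  refine ENNReal.mul_lt_mul_right (ENNReal.inv_ne_zero.2 hc_top) (ENNReal.inv_ne_top.2 hc0) ?_
  calc c * eLpNorm (F n - F m) q (volume.restrict (ball 0 (j + 1)))
      ≤ fofanaWeight d q p φ (2 * (j + 1)) * contAmalgam d (F n - F m) q p (2 * (j + 1)) := by
        rw [mul_assoc]
        gcongr
        exact mul_eLpNorm_restrict_ball_le_contAmalgam _ hp 0 hR
    _ ≤ fofanaNorm d (F n - F m) q p φ := le_fofanaNorm _ q p φ (by positivity)
    _ < B N := hcau N n m hn hm

end Fofana

theorem exists_strictMono_forall_lt_geometric {D : ℕ → ℕ → ℝ≥0∞}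
    (hD : ∀ ε : ℝ, 0 < ε → ∃ N : ℕ, ∀ m ≥ N, ∀ n ≥ N, D m n < ENNReal.ofReal ε) :
    ∃ ns : ℕ → ℕ, StrictMono ns ∧
      ∀ N n m, N ≤ n → N ≤ m → D (ns n) (ns m) < ENNReal.ofReal ((1 / 2) ^ N) := by
  obtain ⟨ns, hns_mono, hns⟩ := extraction_forall_of_eventually fun N => by
    obtain ⟨M, hM⟩ := hD ((1 / 2) ^ N) (by positivity)
    exact eventually_atTop.2 ⟨M, fun k (hk : M ≤ k) a (ha : k ≤ a) b (hb : k ≤ b) =>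
      hM a (hk.trans ha) b (hk.trans hb)⟩
  exact ⟨ns, hns_mono, fun N n m hn hm =>
    hns N _ (hns_mono.monotone hn) _ (hns_mono.monotone hm)⟩

/-- the generalized Fofana space `(L^q,L^p)^φ(ℝ^d)` is complete:
every Cauchy sequence (w.r.t. the Fofana norm) of measurable functions with finite
Fofana norm converges in the Fofana norm to a measurable function with finite norm. -/
theorem fofana_complete (d : ℕ) (q p : ℝ≥0∞) (hq : 1 ≤ q) (hqp : q ≤ p)
    (φ : ℝ → ℝ) (hφ : IsGqp d q p φ)
    (f : ℕ → Rd d → ℂ) (hmeas : ∀ m, Measurable (f m))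
    (hfin : ∀ m, fofanaNorm d (f m) q p φ < ⊤)
    (hcauchy : ∀ ε : ℝ, 0 < ε → ∃ N : ℕ, ∀ m ≥ N, ∀ n ≥ N,
      fofanaNorm d (f m - f n) q p φ < ENNReal.ofReal ε) :
    ∃ g : Rd d → ℂ, Measurable g ∧ fofanaNorm d g q p φ < ⊤ ∧
      Filter.Tendsto (fun m => fofanaNorm d (f m - g) q p φ) Filter.atTop (nhds 0) := by
  have hp : p ≠ 0 := (one_pos.trans_le (hq.trans hqp)).ne'
  obtain ⟨ns, hns_mono, hns⟩ := exists_strictMono_forall_lt_geometric hcauchy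
  have hgeom : ∑' N : ℕ, ENNReal.ofReal ((1 / 2) ^ N) ≠ ∞ := by
    rw [← ENNReal.ofReal_tsum_of_nonneg (fun _ => by positivity) summable_geometric_two]
    exact ofReal_ne_top
  obtain ⟨g, hg, hfg⟩ := measurable_limit_of_tendsto_metrizable_ae
    (fun k => (hmeas (ns k)).aemeasurable) (ae_tendsto_of_cauchy_fofanaNorm hφ.pos hq hp
      (fun k => (hmeas (ns k)).aestronglyMeasurable) hgeom hns)
  have htail : ∀ ε > 0, ∃ N, ∀ m ≥ N, fofanaNorm d (f m - g) q p φ ≤ ENNReal.ofReal ε := by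
    intro ε hε
    obtain ⟨N, hN⟩ := hcauchy ε hε
    refine ⟨N, fun m hm => fofanaNorm_le_of_ae_tendsto hp hqp
      (fun k => (hmeas m).sub (hmeas (ns k))) (hfg.mono fun x hx => hx.const_sub (f m x)) ?_⟩
    exact eventually_atTop.2 ⟨N, fun k hk => (hN m hm _ (hk.trans (hns_mono.id_le k))).le⟩
  refine ⟨g, hg, ?_, ENNReal.tendsto_nhds_zero.2 fun ε hε => ?_⟩
  · obtain ⟨N, hN⟩ := htail 1 one_pos
    exact (fofanaNorm_le_add_fofanaNorm_sub hq hqp (hmeas N) ((hmeas N).sub hg)).trans_lt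
      (add_lt_top.2 ⟨hfin N, (hN N le_rfl).trans_lt ofReal_lt_top⟩)
  · obtain ⟨δ, -, hδ, hδε⟩ := ENNReal.lt_iff_exists_real_btwn.1 hε
    obtain ⟨N, hN⟩ := htail δ (ENNReal.ofReal_pos.1 hδ)
    exact eventually_atTop.2 ⟨N, fun m hm => (hN m hm).trans hδε.le⟩
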